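/- For the Lie algebra g_ω and the general 15-parameter antisymmetric element r with cocommutator δ(X) := (ad_X⊗id + id⊗ad_X)(r), the coisotropy condition δ(J), δ(K₁), δ(K₂) ∈ h⊗g_ω + g_ω⊗h (where h = span{J,K₁,K₂}) holds if and only if a₃ = b₃ = c₃ = 0. This characterisation holds for every value of the parameter ω. -/

import Mathlib

open TensorProduct

/-- `x ∧ y = x ⊗ y − y ⊗ x`. -/
noncomputable def wedge {g : Type*} [AddCommGroup g] [Module ℝ g] (x y : g) :
    TensorProduct ℝ g g := x ⊗ₜ[ℝ] y - y ⊗ₜ[ℝ] x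

/-!
Since `h = span{J, K₁, K₂}` is a subalgebra, `ad_X` preserves `h ⊗ g + g ⊗ h` for `X ∈ h`, and
every term of `r` with a factor in `h` lies in that subspace. Hence `δ(X)` lies in it iff
`ad_X` of the remaining part `a₃ P₀∧P₁ + b₃ P₀∧P₂ + c₃ P₁∧P₂ ∈ Λ²p`, `p = span{P₀, P₁, P₂}`, does.
As `Λ²p` meets `h ⊗ g + g ⊗ h` only in `0` (coordinate functionals of the `Pᵢ` vanish on `h`),
the condition says that `J, K₁, K₂` annihilate that part. On `Λ²p ≅ ℝ³`, `J` acts as a rotation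
and `K₁` as a boost, whose only common zero is `0`.
-/

open LinearMap Module Submodule

theorem LinearIndependent.exists_dual_apply_eq_ite {K V ι : Type*} [Field K] [AddCommGroup V]
    [Module K V] [DecidableEq ι] {v : ι → V} (hv : LinearIndependent K v) :
    ∃ f : ι → Dual K V, ∀ i j, f i (v j) = if i = j then 1 else 0 := by
  obtain ⟨c, hc⟩ := (Finsupp.linearCombination K v).exists_leftInverse_of_injective
    (ker_eq_bot.mpr hv)
  refine ⟨fun i ↦ Finsupp.lapply i ∘ₗ c, fun i j ↦ ?_⟩
  have hcv : c (v j) = Finsupp.single j 1 := by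
    simpa using LinearMap.congr_fun hc (Finsupp.single j 1)
  simp [hcv, Finsupp.single_apply, eq_comm]

section LieModule

variable {R L M : Type*} [CommRing R] [LieRing L] [LieAlgebra R L] [AddCommGroup M] [Module R M]
  [LieRingModule L M] [LieModule R L M]

theorem lie_mem_span_of_forall_lie_mem {X : L} {S : Set M}
    (hS : ∀ s : M, s ∈ S → ⁅X, s⁆ ∈ span R S) {u : M} (hu : u ∈ span R S) :
    ⁅X, u⁆ ∈ span R S :=
  span_le (p := (span R S).comap (LieModule.toEnd R L M X)).mpr hS hu

theorem lie_mem_span_of_mem_of_lie_eq {e₀ e₁ e₂ : L} (h₀₁ : ⁅e₀, e₁⁆ = e₂)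
    (h₀₂ : ⁅e₀, e₂⁆ = -e₁) (h₁₂ : ⁅e₁, e₂⁆ = -e₀) {X u : L} (hX : X ∈ ({e₀, e₁, e₂} : Set L))
    (hu : u ∈ span R {e₀, e₁, e₂}) :
    ⁅X, u⁆ ∈ span R {e₀, e₁, e₂} := by
  have h₁₀ : ⁅e₁, e₀⁆ = -e₂ := by rw [← lie_skew, h₀₁]
  have h₂₀ : ⁅e₂, e₀⁆ = e₁ := by rw [← lie_skew, h₀₂, neg_neg]
  have h₂₁ : ⁅e₂, e₁⁆ = e₀ := by rw [← lie_skew, h₁₂, neg_neg]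
  refine lie_mem_span_of_forall_lie_mem (fun s hs ↦ ?_) hu
  simp only [Set.mem_insert_iff, Set.mem_singleton_iff] at hX hs
  rcases hX with rfl | rfl | rfl <;> rcases hs with rfl | rfl | rfl <;>
    simp [h₀₁, h₀₂, h₁₂, h₁₀, h₂₀, h₂₁, mem_span_of_mem]

/-- `h ⊗ M + M ⊗ h ⊆ M ⊗ M`. -/
def mixedTensors (h : Submodule R M) : Submodule R (M ⊗[R] M) :=
  range (TensorProduct.map h.subtype LinearMap.id) ⊔
    range (TensorProduct.map LinearMap.id h.subtype)

variable {h : Submodule R M}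

theorem tmul_mem_mixedTensors_of_mem_left {u : M} (hu : u ∈ h) (v : M) :
    u ⊗ₜ[R] v ∈ mixedTensors h :=
  mem_sup_left ⟨⟨u, hu⟩ ⊗ₜ v, rfl⟩

theorem tmul_mem_mixedTensors_of_mem_right (u : M) {v : M} (hv : v ∈ h) :
    u ⊗ₜ[R] v ∈ mixedTensors h :=
  mem_sup_right ⟨u ⊗ₜ ⟨v, hv⟩, rfl⟩

theorem mixedTensors_le_ker_dualDistrib {f f' : Dual R M} (hf : h ≤ ker f) (hf' : h ≤ ker f') :
    mixedTensors h ≤ ker (dualDistrib R M M (f ⊗ₜ f')) := by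
  refine sup_le (range_le_ker_iff.mpr ?_) (range_le_ker_iff.mpr ?_) <;> ext u v
  · simp [mem_ker.mp (hf u.2)]
  · simp [mem_ker.mp (hf' v.2)]

theorem lie_mem_mixedTensors {X : L} (hX : ∀ u ∈ h, ⁅X, u⁆ ∈ h) {t : M ⊗[R] M}
    (ht : t ∈ mixedTensors h) : ⁅X, t⁆ ∈ mixedTensors h := by
  obtain ⟨_, ⟨s, rfl⟩, _, ⟨s', rfl⟩, rfl⟩ := mem_sup.mp ht
  clear ht
  rw [lie_add]
  refine add_mem ?_ ?_
  · induction s using TensorProduct.induction_on with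
    | zero => simp
    | tmul u v =>
      simpa using add_mem (tmul_mem_mixedTensors_of_mem_left (hX u u.2) v)
        (tmul_mem_mixedTensors_of_mem_left u.2 ⁅X, v⁆)
    | add s₁ s₂ h₁ h₂ => simpa using add_mem h₁ h₂
  · induction s' using TensorProduct.induction_on with
    | zero => simp
    | tmul u v =>
      simpa using add_mem (tmul_mem_mixedTensors_of_mem_right ⁅X, u⁆ v.2)
        (tmul_mem_mixedTensors_of_mem_right u (hX v v.2))
    | add s₁ s₂ h₁ h₂ => simpa using add_mem h₁ h₂

theorem lie_mem_mixedTensors_iff_of_sub_mem {X : L} (hX : ∀ u ∈ h, ⁅X, u⁆ ∈ h)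
    {t t' : M ⊗[R] M} (ht : t - t' ∈ mixedTensors h) :
    ⁅X, t⁆ ∈ mixedTensors h ↔ ⁅X, t'⁆ ∈ mixedTensors h := by
  have hdiff := lie_mem_mixedTensors hX ht
  rw [lie_sub] at hdiff
  exact ⟨fun h₁ ↦ by simpa using sub_mem h₁ hdiff, fun h₂ ↦ by simpa using add_mem hdiff h₂⟩

end LieModule

section Wedge

variable {V : Type*} [AddCommGroup V] [Module ℝ V] {h : Submodule ℝ V}

theorem wedge_mem_mixedTensors {u v : V} (huv : u ∈ h ∨ v ∈ h) : wedge u v ∈ mixedTensors h := by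
  rcases huv with hu | hv
  · exact sub_mem (tmul_mem_mixedTensors_of_mem_left hu v) (tmul_mem_mixedTensors_of_mem_right v hu)
  · exact sub_mem (tmul_mem_mixedTensors_of_mem_right u hv) (tmul_mem_mixedTensors_of_mem_left hv u)

theorem dualDistrib_wedge (f f' : Dual ℝ V) (x y : V) :
    dualDistrib ℝ V V (f ⊗ₜ f') (wedge x y) = f x * f' y - f y * f' x := by
  simp [wedge]

theorem eq_zero_of_smul_wedge_add_mem_mixedTensors {p : Fin 3 → V} {f : Fin 3 → Dual ℝ V}
    (hfh : ∀ i, h ≤ ker (f i)) (hfp : ∀ i j, f i (p j) = if i = j then 1 else 0) {x y z : ℝ}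
    (hmem : x • wedge (p 0) (p 1) + y • wedge (p 0) (p 2) + z • wedge (p 1) (p 2) ∈
      mixedTensors h) :
    x = 0 ∧ y = 0 ∧ z = 0 := by
  have coeff (i j : Fin 3) := mixedTensors_le_ker_dualDistrib (hfh i) (hfh j) hmem
  simp only [mem_ker, map_add, map_smul, dualDistrib_wedge, hfp] at coeff
  exact ⟨by simpa using coeff 0 1, by simpa using coeff 0 2, by simpa using coeff 1 2⟩

theorem eq_zero_of_smul_wedge_add_mem_mixedTensors_span {u₀ p₀ p₁ p₂ u₁ u₂ : V}
    (hind : LinearIndependent ℝ ![u₀, p₀, p₁, p₂, u₁, u₂]) {x y z : ℝ}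
    (hmem : x • wedge p₀ p₁ + y • wedge p₀ p₂ + z • wedge p₁ p₂ ∈
      mixedTensors (span ℝ {u₀, u₁, u₂})) :
    x = 0 ∧ y = 0 ∧ z = 0 := by
  obtain ⟨f, hf⟩ := hind.exists_dual_apply_eq_ite
  -- `i.castSucc.castSucc.succ = i + 1` is the position of `pᵢ` in the six-term family.
  have hfh : ∀ i, span ℝ {u₀, u₁, u₂} ≤ ker (![f 1, f 2, f 3] i) := by
    intro i
    have hfi := hf i.castSucc.castSucc.succ
    rw [span_le, Set.insert_subset_iff, Set.insert_subset_iff, Set.singleton_subset_iff]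
    fin_cases i <;> exact ⟨by simpa using hfi 0, by simpa using hfi 4, by simpa using hfi 5⟩
  have hfp : ∀ i j, ![f 1, f 2, f 3] i (![p₀, p₁, p₂] j) = if i = j then 1 else 0 := by
    intro i j
    have hfij := hf i.castSucc.castSucc.succ j.castSucc.castSucc.succ
    fin_cases i <;> fin_cases j <;> simpa using hfij
  exact eq_zero_of_smul_wedge_add_mem_mixedTensors hfh hfp hmem

variable {L M : Type*} [LieRing L] [LieAlgebra ℝ L] [AddCommGroup M] [Module ℝ M]
  [LieRingModule L M] [LieModule ℝ L M]

theorem lie_wedge (X : L) (u v : M) : ⁅X, wedge u v⁆ = wedge ⁅X, u⁆ v + wedge u ⁅X, v⁆ := by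
  simp only [wedge, lie_sub, LieModule.lie_tmul_right]
  abel

theorem lie_smul_wedge_add_of_rotation {X : L} {p₀ p₁ p₂ : M} (h₀ : ⁅X, p₀⁆ = 0)
    (h₁ : ⁅X, p₁⁆ = p₂) (h₂ : ⁅X, p₂⁆ = -p₁) (x y z : ℝ) :
    ⁅X, x • wedge p₀ p₁ + y • wedge p₀ p₂ + z • wedge p₁ p₂⁆ =
      (-y) • wedge p₀ p₁ + x • wedge p₀ p₂ + (0 : ℝ) • wedge p₁ p₂ := by
  simp only [lie_add, lie_smul, lie_wedge, h₀, h₁, h₂]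
  simp only [wedge, zero_tmul, tmul_zero, neg_tmul, tmul_neg]
  module

theorem lie_smul_wedge_add_of_boost {X : L} {p₀ p₁ p₂ : M} (h₀ : ⁅X, p₀⁆ = p₁)
    (h₁ : ⁅X, p₁⁆ = p₀) (h₂ : ⁅X, p₂⁆ = 0) (x y z : ℝ) :
    ⁅X, x • wedge p₀ p₁ + y • wedge p₀ p₂ + z • wedge p₁ p₂⁆ =
      (0 : ℝ) • wedge p₀ p₁ + z • wedge p₀ p₂ + y • wedge p₁ p₂ := by
  simp only [lie_add, lie_smul, lie_wedge, h₀, h₁, h₂]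
  simp only [wedge, zero_tmul, tmul_zero]
  module

end Wedge

theorem coisotropy_condition_g_omega
    (g : Type*) [LieRing g] [LieAlgebra ℝ g]
    (J P0 P1 P2 K1 K2 : g)
    (hind : LinearIndependent ℝ ![J, P0, P1, P2, K1, K2])
    (hJP1 : ⁅J, P1⁆ = P2) (hJP2 : ⁅J, P2⁆ = -P1)
    (hJK1 : ⁅J, K1⁆ = K2) (hJK2 : ⁅J, K2⁆ = -K1) (hJP0 : ⁅J, P0⁆ = 0)
    (hP1K1 : ⁅P1, K1⁆ = -P0)
    (hP2K1 : ⁅P2, K1⁆ = 0)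
    (hP0K1 : ⁅P0, K1⁆ = -P1)
    (hK1K2 : ⁅K1, K2⁆ = -J)
    (a1 a2 a3 a4 a5 a6 b1 b2 b3 b4 b5 b6 c1 c2 c3 : ℝ)
    (r : TensorProduct ℝ g g)
    (hr : r = a1 • wedge J P1 + a2 • wedge J K1 + a3 • wedge P0 P1 + a4 • wedge P0 K1
      + a5 • wedge P1 K1 + a6 • wedge P1 K2 + b1 • wedge J P2 + b2 • wedge J K2
      + b3 • wedge P0 P2 + b4 • wedge P0 K2 + b5 • wedge P2 K2 + b6 • wedge P2 K1
      + c1 • wedge J P0 + c2 • wedge K1 K2 + c3 • wedge P1 P2)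
    (δ : g → TensorProduct ℝ g g)
    (hδ : ∀ X : g, δ X =
      (TensorProduct.map (LieAlgebra.ad ℝ g X : g →ₗ[ℝ] g) (LinearMap.id : g →ₗ[ℝ] g)
        + TensorProduct.map (LinearMap.id : g →ₗ[ℝ] g)
            (LieAlgebra.ad ℝ g X : g →ₗ[ℝ] g)) r) :
    let h : Submodule ℝ g := Submodule.span ℝ {J, K1, K2}
    let hg : Submodule ℝ (TensorProduct ℝ g g) :=
      LinearMap.range (TensorProduct.map h.subtype (LinearMap.id : g →ₗ[ℝ] g))
    let gh : Submodule ℝ (TensorProduct ℝ g g) :=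
      LinearMap.range (TensorProduct.map (LinearMap.id : g →ₗ[ℝ] g) h.subtype)
    ((δ J ∈ hg ⊔ gh ∧ δ K1 ∈ hg ⊔ gh ∧ δ K2 ∈ hg ⊔ gh) ↔
      (a3 = 0 ∧ b3 = 0 ∧ c3 = 0)) := by
  intro h hg gh
  change (δ J ∈ mixedTensors h ∧ δ K1 ∈ mixedTensors h ∧ δ K2 ∈ mixedTensors h) ↔ _
  -- The Lie module structure of `g ⊗ g` is defined by this very formula.
  replace hδ : ∀ X, δ X = ⁅X, r⁆ := hδ
  set rP := a3 • wedge P0 P1 + b3 • wedge P0 P2 + c3 • wedge P1 P2 with hrP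
  have hrest : r - rP ∈ mixedTensors h := by
    have hJ : J ∈ h := mem_span_of_mem (by simp)
    have hK1 : K1 ∈ h := mem_span_of_mem (by simp)
    have hK2 : K2 ∈ h := mem_span_of_mem (by simp)
    have hvanish : ∀ u v : g, u ∈ h ∨ v ∈ h →
        (Submodule.Quotient.mk (wedge u v) : _ ⧸ mixedTensors h) = 0 :=
      fun u v huv ↦ (Submodule.Quotient.mk_eq_zero _).mpr (wedge_mem_mixedTensors huv)
    rw [← Submodule.Quotient.eq, hr, hrP]
    simp [hvanish, hJ, hK1, hK2]
  have hreduce : ∀ X ∈ ({J, K1, K2} : Set g), δ X ∈ mixedTensors h ↔ ⁅X, rP⁆ ∈ mixedTensors h :=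
    fun X hX ↦ by
      rw [hδ]
      exact lie_mem_mixedTensors_iff_of_sub_mem
        (fun _ ↦ lie_mem_span_of_mem_of_lie_eq hJK1 hJK2 hK1K2 hX) hrest
  rw [hreduce J (by simp), hreduce K1 (by simp), hreduce K2 (by simp)]
  constructor
  · rintro ⟨hJ, hK1, -⟩
    rw [lie_smul_wedge_add_of_rotation hJP0 hJP1 hJP2] at hJ
    rw [lie_smul_wedge_add_of_boost (by rw [← lie_skew, hP0K1, neg_neg])
      (by rw [← lie_skew, hP1K1, neg_neg]) (by rw [← lie_skew, hP2K1, neg_zero])] at hK1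
    obtain ⟨hb3, ha3, -⟩ := eq_zero_of_smul_wedge_add_mem_mixedTensors_span hind hJ
    obtain ⟨-, hc3, -⟩ := eq_zero_of_smul_wedge_add_mem_mixedTensors_span hind hK1
    exact ⟨ha3, neg_eq_zero.mp hb3, hc3⟩
  · rintro ⟨rfl, rfl, rfl⟩
    simp [rP]
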